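/- Consider the Young lattice with multiplicity function κ(λ,Λ) = (1/q^{λ'_i}) ∏_{s∈λ}[h_Λ(s)]_q / ∏_{s∈λ}[h_λ(s)]_q (cell added in column i, [m]_q the q-integer, h the hook length). Then the associated dimension function satisfies dim(Λ) = f^Λ · ∏_{s∈Λ} [h_Λ(s)]_q / q^{n(Λ)}, where f^Λ is the number of standard Young tableaux of shape Λ and n(Λ) = Σ_i (i−1)Λ_i. -/

import Mathlib

/-- Arm length: the number of cells of `μ` strictly east of the cell `s`. -/
def arm (μ : YoungDiagram) (s : ℕ × ℕ) : ℕ := μ.rowLen s.1 - (s.2 + 1)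

/-- Leg length: the number of cells of `μ` strictly south of the cell `s`. -/
def leg (μ : YoungDiagram) (s : ℕ × ℕ) : ℕ := μ.colLen s.2 - (s.1 + 1)

/-- Hook length of the cell `s` in `μ`: `h = a + l + 1`. -/
def hook (μ : YoungDiagram) (s : ℕ × ℕ) : ℕ := arm μ s + leg μ s + 1

/-- The q-integer `[m]_q = (q^m − 1)/(q − 1)`. -/
noncomputable def qint (q : ℝ) (m : ℕ) : ℝ := (q ^ m - 1) / (q - 1)

/-! If `ν` arises from `μ` by adding the cell `(r, c)`, that cell is a corner of `ν`, so its hook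
length is `1` and `[1]_q = 1`, while `r = μ'_c`. Hence `κ(μ, ν) = w(ν) / w(μ)` for the weight
`w(μ) = ∏_{s ∈ μ} [h_μ(s)]_q / q^{n(μ)}`, the product of `κ` along any saturated chain from `∅` to
`Λ` telescopes to `w(Λ)`, and summing over the `f^Λ` chains gives `f^Λ · w(Λ)`. -/

theorem Finset.prod_range_div_of_ne_zero {G₀ : Type*} [CommGroupWithZero G₀] (f : ℕ → G₀)
    (hf : ∀ i, f i ≠ 0) (n : ℕ) : ∏ i ∈ Finset.range n, f (i + 1) / f i = f n / f 0 := by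
  induction n with
  | zero => simp [hf 0]
  | succ n ih => rw [Finset.prod_range_succ, ih, mul_comm, div_mul_div_cancel₀ (hf n)]

namespace YoungDiagram

variable {μ ν : YoungDiagram} {y : ℕ × ℕ} {r c : ℕ}

theorem rowLen_eq_of_mem_of_notMem (h : (r, c) ∈ μ) (h' : (r, c + 1) ∉ μ) :
    μ.rowLen r = c + 1 :=
  le_antisymm (not_lt.1 (h' ∘ mem_iff_lt_rowLen.2)) (mem_iff_lt_rowLen.1 h)

theorem colLen_eq_of_mem_of_notMem (h : (r, c) ∈ μ) (h' : (r + 1, c) ∉ μ) :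
    μ.colLen c = r + 1 :=
  le_antisymm (not_lt.1 (h' ∘ mem_iff_lt_colLen.2)) (mem_iff_lt_colLen.1 h)

theorem sum_fst_cells (μ : YoungDiagram) :
    ∑ s ∈ μ.cells, s.1 = ∑ i ∈ Finset.range (μ.colLen 0), i * μ.rowLen i := by
  have hmaps : ∀ s ∈ μ.cells, s.1 ∈ Finset.range (μ.colLen 0) := fun s hs =>
    Finset.mem_range.2 <| mem_iff_lt_colLen.1 <|
      μ.up_left_mem le_rfl (Nat.zero_le _) ((mem_cells s).1 hs)
  rw [← Finset.sum_fiberwise_of_maps_to hmaps]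
  refine Finset.sum_congr rfl fun i _ => ?_
  rw [Finset.sum_congr rfl fun s hs => (Finset.mem_filter.1 hs).2, Finset.sum_const,
    smul_eq_mul, mul_comm, rowLen_eq_card]
  rfl

theorem mem_of_lt_of_cells_eq_insert (hν : ν.cells = insert (r, c) μ.cells) (hy : y < (r, c)) :
    y ∈ μ := by
  have hyν : y ∈ ν.cells := ν.isLowerSet hy.le (by simp [hν])
  rw [hν, Finset.mem_insert, mem_cells] at hyν
  exact hyν.resolve_left hy.ne

theorem notMem_of_gt_of_cells_eq_insert (hx : (r, c) ∉ μ.cells)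
    (hν : ν.cells = insert (r, c) μ.cells) (hy : (r, c) < y) : y ∉ ν := by
  rw [← mem_cells, hν, Finset.mem_insert, mem_cells, not_or]
  exact ⟨hy.ne', fun hyμ => hx (μ.isLowerSet hy.le hyμ)⟩

theorem colLen_eq_of_cells_eq_insert (hx : (r, c) ∉ μ.cells)
    (hν : ν.cells = insert (r, c) μ.cells) : μ.colLen c = r := by
  refine le_antisymm (not_lt.1 (hx ∘ mem_iff_lt_colLen.2)) (le_of_forall_lt fun i hi => ?_)
  exact mem_iff_lt_colLen.1 (mem_of_lt_of_cells_eq_insert hν (by simpa [Prod.lt_iff] using hi))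

theorem hook_eq_one_of_cells_eq_insert (hx : (r, c) ∉ μ.cells)
    (hν : ν.cells = insert (r, c) μ.cells) : hook ν (r, c) = 1 := by
  have hmem : (r, c) ∈ ν := by simp [← mem_cells, hν]
  have hrow := rowLen_eq_of_mem_of_notMem hmem
    (notMem_of_gt_of_cells_eq_insert hx hν (by simp [Prod.lt_iff]))
  have hcol := colLen_eq_of_mem_of_notMem hmem
    (notMem_of_gt_of_cells_eq_insert hx hν (by simp [Prod.lt_iff]))
  simp [hook, arm, leg, hrow, hcol]

end YoungDiagram

section QInt

variable {q : ℝ}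

theorem qint_one (hq : q ≠ 1) : qint q 1 = 1 := by
  rw [qint, pow_one, div_self (sub_ne_zero.2 hq)]

theorem qint_ne_zero (hq0 : 0 ≤ q) (hq1 : q ≠ 1) {m : ℕ} (hm : m ≠ 0) : qint q m ≠ 0 :=
  div_ne_zero (sub_ne_zero.2 fun h => hq1 ((pow_eq_one_iff_of_nonneg hq0 hm).1 h))
    (sub_ne_zero.2 hq1)

end QInt

section HookWeight

open YoungDiagram

variable {q : ℝ}

/-- With 0-based rows, `n(μ) = Σ_i (i - 1) μ_i` is the sum of the row indices of the cells. -/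
noncomputable def hookWeight (q : ℝ) (μ : YoungDiagram) : ℝ :=
  (∏ s ∈ μ.cells, qint q (hook μ s)) / q ^ ∑ s ∈ μ.cells, s.1

@[simp]
theorem hookWeight_bot : hookWeight q ⊥ = 1 := by
  simp [hookWeight]

theorem prod_qint_hook_ne_zero (hq0 : 0 ≤ q) (hq1 : q ≠ 1) (μ ν : YoungDiagram) :
    ∏ s ∈ μ.cells, qint q (hook ν s) ≠ 0 :=
  Finset.prod_ne_zero_iff.2 fun _ _ => qint_ne_zero hq0 hq1 (by simp [hook])

theorem hookWeight_ne_zero (hq0 : 0 < q) (hq1 : q ≠ 1) (μ : YoungDiagram) :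
    hookWeight q μ ≠ 0 :=
  div_ne_zero (prod_qint_hook_ne_zero hq0.le hq1 μ μ) (pow_ne_zero _ hq0.ne')

theorem multiplicity_eq_hookWeight_div (hq0 : 0 < q) (hq1 : q ≠ 1) {μ ν : YoungDiagram}
    {r c : ℕ} (hx : (r, c) ∉ μ.cells) (hν : ν.cells = insert (r, c) μ.cells) :
    1 / q ^ μ.colLen c * (∏ s ∈ μ.cells, qint q (hook ν s)) / ∏ s ∈ μ.cells, qint q (hook μ s)
      = hookWeight q ν / hookWeight q μ := by
  have hprod : ∏ s ∈ ν.cells, qint q (hook ν s) = ∏ s ∈ μ.cells, qint q (hook ν s) := by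
    rw [hν, Finset.prod_insert hx, hook_eq_one_of_cells_eq_insert hx hν, qint_one hq1, one_mul]
  have hsum : ∑ s ∈ ν.cells, s.1 = μ.colLen c + ∑ s ∈ μ.cells, s.1 := by
    rw [hν, Finset.sum_insert hx, colLen_eq_of_cells_eq_insert hx hν]
  have hP := prod_qint_hook_ne_zero hq0.le hq1 μ μ
  have hq : q ≠ 0 := hq0.ne'
  rw [hookWeight, hookWeight, hprod, hsum, pow_add]
  field_simp

end HookWeight

theorem schur_dimension_formula_general
    (q : ℝ) (hq0 : 0 < q) (hq1 : q < 1)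
    (κf : YoungDiagram → YoungDiagram → ℝ)
    (hκf : ∀ (μ ν : YoungDiagram) (r c : ℕ), (r, c) ∉ μ.cells →
      ν.cells = insert (r, c) μ.cells →
      κf μ ν = (1 / q ^ μ.colLen c) *
        (∏ s ∈ μ.cells, qint q (hook ν s)) / (∏ s ∈ μ.cells, qint q (hook μ s)))
    (n : ℕ) (Λ : YoungDiagram)
    (S : Finset (ℕ → YoungDiagram))
    (hS : ∀ γ : ℕ → YoungDiagram, γ ∈ S ↔
      (γ 0 = ⊥ ∧ (∀ j, n ≤ j → γ j = Λ) ∧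
        ∀ j < n, ∃ x, x ∉ (γ j).cells ∧ (γ (j + 1)).cells = insert x (γ j).cells)) :
    ∑ γ ∈ S, ∏ j ∈ Finset.range n, κf (γ j) (γ (j + 1))
      = S.card * (∏ s ∈ Λ.cells, qint q (hook Λ s)) /
          q ^ (∑ i ∈ Finset.range (Λ.colLen 0), i * Λ.rowLen i) := by
  have hq : q ≠ 1 := hq1.ne
  have hchain : ∀ γ ∈ S, ∏ j ∈ Finset.range n, κf (γ j) (γ (j + 1)) = hookWeight q Λ := by
    intro γ hγ
    obtain ⟨hbot, hΛ, hstep⟩ := (hS γ).1 hγ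
    calc ∏ j ∈ Finset.range n, κf (γ j) (γ (j + 1))
        = ∏ j ∈ Finset.range n, hookWeight q (γ (j + 1)) / hookWeight q (γ j) := by
          refine Finset.prod_congr rfl fun j hj => ?_
          obtain ⟨⟨r, c⟩, hx, hν⟩ := hstep j (Finset.mem_range.1 hj)
          rw [hκf _ _ r c hx hν, multiplicity_eq_hookWeight_div hq0 hq hx hν]
      _ = hookWeight q (γ n) / hookWeight q (γ 0) :=
          Finset.prod_range_div_of_ne_zero _ (fun _ => hookWeight_ne_zero hq0 hq _) n
      _ = hookWeight q Λ := by rw [hbot, hΛ n le_rfl, hookWeight_bot, div_one]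
  rw [Finset.sum_congr rfl hchain, Finset.sum_const, nsmul_eq_mul, hookWeight,
    YoungDiagram.sum_fst_cells, mul_div_assoc]

/-- Consider the Young lattice with the Schur multiplicity function
`κ(λ,Λ) = (1/q^{λ'_i}) ∏_{s∈λ}[h_Λ(s)]_q / ∏_{s∈λ}[h_λ(s)]_q` (cell added in
column `i`, here the added cell is `(r,c)` 0-based so `λ'_i = colLen c`).
Encode the set of saturated chains from `∅` to `Λ` (with `|Λ| = n`) as a
Finset `S` of functions `ℕ → YoungDiagram` that start at `⊥`, add one cell at
each of the first `n` steps, and are constantly `Λ` from time `n` on; the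
number of such chains is `f^Λ = S.card`, the number of standard Young tableaux
of shape `Λ`.  Then the dimension function —
`dim(Λ) = Σ_{chains γ} ∏_{j=1}^n κ(γ(j−1), γ(j))` — satisfies
`dim(Λ) = f^Λ · ∏_{s∈Λ} [h_Λ(s)]_q / q^{n(Λ)}` with `n(Λ) = Σ_i (i−1)Λ_i`. -/
theorem schur_dimension_formula
    (q : ℝ) (hq0 : 0 < q) (hq1 : q < 1)
    (κf : YoungDiagram → YoungDiagram → ℝ)
    (hκf : ∀ (μ ν : YoungDiagram) (r c : ℕ), (r, c) ∉ μ.cells →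
      ν.cells = insert (r, c) μ.cells →
      κf μ ν = (1 / q ^ μ.colLen c) *
        (∏ s ∈ μ.cells, qint q (hook ν s)) / (∏ s ∈ μ.cells, qint q (hook μ s)))
    (n : ℕ) (Λ : YoungDiagram) (hΛ : Λ.cells.card = n)
    (S : Finset (ℕ → YoungDiagram))
    (hS : ∀ γ : ℕ → YoungDiagram, γ ∈ S ↔
      (γ 0 = ⊥ ∧ (∀ j, n ≤ j → γ j = Λ) ∧
        ∀ j < n, ∃ x, x ∉ (γ j).cells ∧ (γ (j + 1)).cells = insert x (γ j).cells)) :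
    ∑ γ ∈ S, ∏ j ∈ Finset.range n, κf (γ j) (γ (j + 1))
      = S.card * (∏ s ∈ Λ.cells, qint q (hook Λ s)) /
          q ^ (∑ i ∈ Finset.range (Λ.colLen 0), i * Λ.rowLen i) :=
  schur_dimension_formula_general q hq0 hq1 κf hκf n Λ S hS
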